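/- arXiv:2503.15772 — 4 statements merged into one kernel-verified Lean document; each statement's English description precedes it below -/
import Mathlib

section
/- Let W be a nonempty finite set and let V be a random subset of W (the set of watermarks occurring in a human-written review), independent of W* which is uniform on W. Then P(W* ∈ V and |V| ≤ τ) ≤ τ / |W|. -/
/-- If `V` is a random subset of the nonempty finite set `W` (distribution `q`),
independent of `W*` which is uniform on `W`, then
`P(W* ∈ V ∧ |V| ≤ τ) ≤ τ / |W|`. Independence is modeled by the product
distribution `q.bind (fun v => (uniform).map (Prod.mk v))`. -/
theorem stmt1 {W : Type*} [Fintype W] [Nonempty W] (τ : ℕ) (q : PMF (Finset W)) :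
    (q.bind fun v => (PMF.uniformOfFintype W).map (Prod.mk v)).toOuterMeasure
        {x : Finset W × W | x.2 ∈ x.1 ∧ x.1.card ≤ τ}
      ≤ (τ : ENNReal) / (Fintype.card W : ENNReal) := by
  classical
  set N : ENNReal := (Fintype.card W : ENNReal) with hN
  set p := q.bind fun v => (PMF.uniformOfFintype W).map (Prod.mk v) with hpdef
  have hp : ∀ x : Finset W × W, p x = q x.1 * N⁻¹ := by
    rintro ⟨v, w⟩
    rw [hpdef, PMF.bind_apply]
    have hmap : ∀ v' : Finset W,
        ((PMF.uniformOfFintype W).map (Prod.mk v')) (v, w)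
          = if v' = v then N⁻¹ else 0 := by
      intro v'
      rw [PMF.map_apply]
      by_cases h : v' = v
      · subst h
        simp only [Prod.ext_iff, true_and, PMF.uniformOfFintype_apply, hN]
        rw [tsum_eq_single w (by intro b hb; simp [Ne.symm hb])]
        simp
      · simp [Prod.ext_iff, Ne.symm h, h]
    simp only [hmap, mul_ite, mul_zero]
    rw [tsum_eq_single v (by intro b hb; simp [hb])]
    simp
  rw [PMF.toOuterMeasure_apply]
  calc ∑' x, Set.indicator {x : Finset W × W | x.2 ∈ x.1 ∧ x.1.card ≤ τ} p x
      = ∑' (v : Finset W) (w : W),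
          (if w ∈ v ∧ v.card ≤ τ then q v * N⁻¹ else 0) := by
        rw [ENNReal.tsum_prod']
        congr 1; ext v; congr 1; ext w
        by_cases h : w ∈ v ∧ v.card ≤ τ
        · simp only [Set.indicator_apply, Set.mem_setOf_eq, h, if_true, hp]
        · simp only [Set.indicator_apply, Set.mem_setOf_eq, h, if_false]
    _ ≤ ∑' (v : Finset W), q v * ((τ : ENNReal) * N⁻¹) := by
        apply ENNReal.tsum_le_tsum
        intro v
        by_cases hc : v.card ≤ τ
        · rw [tsum_fintype]
          simp only [hc, and_true]
          rw [Finset.sum_ite_mem, Finset.univ_inter, Finset.sum_const, nsmul_eq_mul]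
          calc (v.card : ENNReal) * (q v * N⁻¹)
              ≤ (τ : ENNReal) * (q v * N⁻¹) :=
                mul_le_mul_left (by exact_mod_cast hc) _
            _ = q v * ((τ : ENNReal) * N⁻¹) := by ring
        · simp [hc]
    _ = (τ : ENNReal) * N⁻¹ := by
        rw [ENNReal.tsum_mul_right, q.tsum_coe, one_mul]
    _ = (τ : ENNReal) / N := by rw [div_eq_mul_inv]
end

section
/- Let R be a finite index set of reviews and W a nonempty finite set of watermarks. Let X : R × W → {0,1} be a fixed 0-1 matrix, and for each i ∈ R let W*_i be chosen independently and uniformly at random from W. Suppose I ⊆ R and J ⊆ W satisfy Σ_{i ∈ R∖I, j ∈ W∖J} X i j ≤ α |W|. If review i is flagged exactly when i ∉ I, W*_i ∉ J, and X i W*_i = 1, then the probability that at least one review is flagged is at most α. -/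
open Finset
open scoped ENNReal NNReal

private lemma count_eval {R W : Type*} [Fintype R] [Fintype W] [DecidableEq R] [DecidableEq W]
    (i : R) (B : Finset W) :
    (Finset.univ.filter (fun f : R → W => f i ∈ B)).card
      = B.card * (Fintype.card W) ^ (Fintype.card R - 1) := by
  classical
  have e : {f : R → W // f i ∈ B} ≃ {w : W // w ∈ B} × ({j : R // j ≠ i} → W) :=
    ((Equiv.funSplitAt i W).subtypeEquiv (fun f => by simp)).trans
      Equiv.prodSubtypeFstEquivSubtypeProd
  have h := Fintype.card_congr e
  rw [Fintype.card_subtype] at h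
  rw [h, Fintype.card_prod, Fintype.card_fun, Fintype.card_coe]
  congr 2
  have : Fintype.card {j : R // j ≠ i} = Fintype.card R - Fintype.card {j : R // j = i} :=
    Fintype.card_subtype_compl _
  rw [this, Fintype.card_subtype_eq]

/-- FWER guarantee (Proposition 1(b)): with `X : R × W → {0,1}` fixed, the watermarks
`W*_i` i.i.d. uniform on `W` (modeled as a uniformly random function `f : R → W`),
and discard sets `I ⊆ R`, `J ⊆ W` satisfying
`Σ_{i ∈ R∖I, j ∈ W∖J} X i j ≤ α |W|`, the probability that at least one review is
flagged (i.e. some `i ∉ I` has `f i ∉ J` and `X i (f i) = 1`) is at most `α`. -/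
theorem stmt2 {R W : Type*} [Fintype R] [Fintype W] [Nonempty W] [DecidableEq R]
    [DecidableEq W]
    (X : R → W → ℕ) (hX01 : ∀ i j, X i j ≤ 1)
    (I : Finset R) (J : Finset W) (α : ℝ) (hα : 0 ≤ α)
    (hconstraint : (∑ i ∈ Finset.univ \ I, ∑ j ∈ Finset.univ \ J, (X i j : ℝ))
        ≤ α * (Fintype.card W : ℝ)) :
    (PMF.uniformOfFintype (R → W)).toOuterMeasure
        {f : R → W | ∃ i, i ∉ I ∧ f i ∉ J ∧ X i (f i) = 1}
      ≤ ENNReal.ofReal α := by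
  classical
  rcases isEmpty_or_nonempty R with hR | hR
  · have : {f : R → W | ∃ i, i ∉ I ∧ f i ∉ J ∧ X i (f i) = 1} = ∅ := by
      ext f; simp [IsEmpty.forall_iff]
    rw [this]
    simp
  set n := Fintype.card W with hn
  set m := Fintype.card R with hm
  have hn0 : 0 < n := Fintype.card_pos
  set B : R → Finset W := fun i => (Finset.univ \ J).filter (fun j => X i j = 1) with hB
  set P : (R → W) → Prop := fun f => ∃ i, i ∉ I ∧ f i ∉ J ∧ X i (f i) = 1 with hP
  set S : Finset (R → W) := Finset.univ.filter P with hS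
  -- step 1: bound by measure of the finset S
  have hsub : {f : R → W | P f} ⊆ (S : Set (R → W)) := by
    intro f hf; simp [hS, Finset.mem_coe, Finset.mem_filter]; exact hf
  have h1 : (PMF.uniformOfFintype (R → W)).toOuterMeasure {f : R → W | P f}
      ≤ ∑ f ∈ S, (PMF.uniformOfFintype (R → W)) f := by
    rw [← PMF.toOuterMeasure_apply_finset]
    exact (PMF.uniformOfFintype (R → W)).toOuterMeasure.mono hsub
  have hval : ∀ f : R → W, (PMF.uniformOfFintype (R → W)) f = ((n ^ m : ℕ) : ℝ≥0∞)⁻¹ := by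
    intro f
    rw [PMF.uniformOfFintype_apply]
    congr 1
    rw [Fintype.card_fun]
  have h2 : ∑ f ∈ S, (PMF.uniformOfFintype (R → W)) f
      = (S.card : ℝ≥0∞) * ((n ^ m : ℕ) : ℝ≥0∞)⁻¹ := by
    rw [Finset.sum_congr rfl (fun f _ => hval f), Finset.sum_const, nsmul_eq_mul]
  -- step 2: union bound on card
  have hcard : S.card ≤ ∑ i ∈ Finset.univ \ I, (B i).card * n ^ (m - 1) := by
    have hsub2 : S ⊆ (Finset.univ \ I).biUnion
        (fun i => Finset.univ.filter (fun f : R → W => f i ∈ B i)) := by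
      intro f hf
      rw [hS, Finset.mem_filter] at hf
      obtain ⟨-, i, hiI, hiJ, hXi⟩ := hf
      refine Finset.mem_biUnion.2 ⟨i, by simp [hiI], ?_⟩
      simp [hB, hiJ, hXi]
    calc S.card ≤ _ := Finset.card_le_card hsub2
      _ ≤ ∑ i ∈ Finset.univ \ I,
            (Finset.univ.filter (fun f : R → W => f i ∈ B i)).card :=
          Finset.card_biUnion_le
      _ = ∑ i ∈ Finset.univ \ I, (B i).card * n ^ (m - 1) := by
          refine Finset.sum_congr rfl fun i _ => ?_
          exact count_eval i (B i)
  -- step 3: card of B i equals the row sum of X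
  have hrow : ∀ i, ((B i).card : ℝ) = ∑ j ∈ Finset.univ \ J, (X i j : ℝ) := by
    intro i
    rw [hB]
    rw [Finset.card_filter]
    push_cast
    refine Finset.sum_congr rfl fun j hj => ?_
    have := hX01 i j
    interval_cases h : X i j <;> simp
  -- step 4: total count bound
  set C : ℕ := ∑ i ∈ Finset.univ \ I, (B i).card with hC
  have hCle : (C : ℝ) ≤ α * n := by
    calc (C : ℝ) = ∑ i ∈ Finset.univ \ I, ((B i).card : ℝ) := by push_cast [hC]; ring_nf
      _ = ∑ i ∈ Finset.univ \ I, ∑ j ∈ Finset.univ \ J, (X i j : ℝ) :=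
          Finset.sum_congr rfl fun i _ => hrow i
      _ ≤ α * n := hconstraint
  -- step 5: put it together in ℝ≥0∞
  have hm1 : m = (m - 1) + 1 := (Nat.succ_pred_eq_of_pos Fintype.card_pos).symm
  have hpow_ne : ((n ^ (m - 1) : ℕ) : ℝ≥0∞) ≠ 0 := by
    simp [pow_ne_zero, hn0.ne']
  have hpow_ne_top : ((n ^ (m - 1) : ℕ) : ℝ≥0∞) ≠ ⊤ := ENNReal.natCast_ne_top _
  calc (PMF.uniformOfFintype (R → W)).toOuterMeasure {f : R → W | P f}
      ≤ (S.card : ℝ≥0∞) * ((n ^ m : ℕ) : ℝ≥0∞)⁻¹ := h1.trans (le_of_eq h2)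
    _ ≤ ((C * n ^ (m - 1) : ℕ) : ℝ≥0∞) * ((n ^ m : ℕ) : ℝ≥0∞)⁻¹ := by
        gcongr
        · exact_mod_cast hcard.trans (le_of_eq (Finset.sum_mul _ _ _).symm)
    _ = (C : ℝ≥0∞) * (n : ℝ≥0∞)⁻¹ := by
        have hp0 : ((n : ℝ≥0∞)) ^ (m - 1) ≠ 0 := pow_ne_zero _ (by exact_mod_cast hn0.ne')
        have hpt : ((n : ℝ≥0∞)) ^ (m - 1) ≠ ⊤ := by
          exact ENNReal.pow_ne_top (ENNReal.natCast_ne_top _)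
        rw [hm1]
        push_cast
        rw [pow_succ, ENNReal.mul_inv (Or.inl hp0) (Or.inl hpt)]
        rw [show (C : ℝ≥0∞) * (n : ℝ≥0∞) ^ (m - 1) * ((((n : ℝ≥0∞) ^ (m - 1))⁻¹) * (n : ℝ≥0∞)⁻¹)
            = (C : ℝ≥0∞) * ((n : ℝ≥0∞) ^ (m - 1) * ((n : ℝ≥0∞) ^ (m - 1))⁻¹) * (n : ℝ≥0∞)⁻¹
            by ring]
        rw [ENNReal.mul_inv_cancel hp0 hpt, mul_one]
    _ ≤ ENNReal.ofReal α := by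
        have hn0' : ((n : ℝ≥0∞)) ≠ 0 := by exact_mod_cast hn0.ne'
        have hnt : ((n : ℝ≥0∞)) ≠ ⊤ := ENNReal.natCast_ne_top _
        have hCb : (C : ℝ≥0∞) ≤ ENNReal.ofReal α * (n : ℝ≥0∞) := by
          rw [← ENNReal.ofReal_natCast C]
          calc ENNReal.ofReal (C : ℝ) ≤ ENNReal.ofReal (α * n) :=
                ENNReal.ofReal_le_ofReal hCle
            _ = ENNReal.ofReal α * (n : ℝ≥0∞) := by
                rw [ENNReal.ofReal_mul hα, ENNReal.ofReal_natCast]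
        calc (C : ℝ≥0∞) * (n : ℝ≥0∞)⁻¹ ≤ (ENNReal.ofReal α * (n : ℝ≥0∞)) * (n : ℝ≥0∞)⁻¹ := by
              gcongr
          _ = ENNReal.ofReal α := by
              rw [mul_assoc, ENNReal.mul_inv_cancel hn0' hnt, mul_one]
end

section
/- Let R, W be finite sets with W nonempty and α ≥ 0 with α |W| < |R|. Suppose X : R × W → {0,1} is such that the number of reviews i with Σ_{j ∈ W} X i j = 1 is at most ⌊α |W|⌋ and all other reviews i have Σ_{j ∈ W} X i j = 0. Then the global constraint Σ_{i ∈ R, j ∈ W} X i j ≤ α |W| holds (so Algorithm 2 discards nothing), yet the Bonferroni threshold α |W| / |R| is strictly less than 1, so Bonferroni-corrected Algorithm 1 cannot flag any review containing its watermark. -/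
/-- Suppose `α |W| < |R|`, at most `⌊α |W|⌋` reviews contain exactly one element of
`W` and every other review contains none. Then the global constraint
`Σ_{i,j} X i j ≤ α |W|` holds (so Algorithm 2 discards nothing), yet the Bonferroni
threshold `α |W| / |R|` is strictly less than `1`, so Bonferroni-corrected
Algorithm 1 cannot flag any review containing its watermark. -/
theorem stmt5 {R W : Type*} [Fintype R] [Fintype W] [Nonempty W] [DecidableEq W]
    (X : R → W → ℕ) (hX01 : ∀ i j, X i j ≤ 1) (α : ℝ) (hα : 0 ≤ α)
    (hsmall : α * (Fintype.card W : ℝ) < (Fintype.card R : ℝ))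
    (hone : ((Finset.univ.filter fun i : R => ∑ j : W, X i j = 1).card : ℝ)
        ≤ ⌊α * (Fintype.card W : ℝ)⌋₊)
    (hzero : ∀ i : R, (∑ j : W, X i j = 1) ∨ (∑ j : W, X i j = 0)) :
    (∑ i : R, ∑ j : W, (X i j : ℝ)) ≤ α * (Fintype.card W : ℝ)
    ∧ α * (Fintype.card W : ℝ) / (Fintype.card R : ℝ) < 1
    ∧ ∀ (i : R) (w : W),
        ¬ (((Finset.univ.filter fun j : W => X i j = 1).card : ℝ)
              ≤ α * (Fintype.card W : ℝ) / (Fintype.card R : ℝ)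
            ∧ X i w = 1) := by
  have hαW : (0:ℝ) ≤ α * (Fintype.card W : ℝ) := by positivity
  have hRpos : (0:ℝ) < (Fintype.card R : ℝ) := lt_of_le_of_lt hαW hsmall
  have hthresh : α * (Fintype.card W : ℝ) / (Fintype.card R : ℝ) < 1 := by
    rw [div_lt_one hRpos]; exact hsmall
  refine ⟨?_, hthresh, ?_⟩
  · have hsum : (∑ i : R, ∑ j : W, X i j)
        = (Finset.univ.filter fun i : R => ∑ j : W, X i j = 1).card := by
      rw [Finset.card_filter]
      apply Finset.sum_congr rfl
      intro i _
      rcases hzero i with h | h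
      · simp [h]
      · simp [h]
    have : (∑ i : R, ∑ j : W, (X i j : ℝ))
        = ((∑ i : R, ∑ j : W, X i j : ℕ) : ℝ) := by push_cast; ring
    rw [this, hsum]
    exact hone.trans (Nat.floor_le hαW)
  · rintro i w ⟨hle, hXw⟩
    have hmem : w ∈ Finset.univ.filter fun j : W => X i j = 1 := by
      simp [hXw]
    have hcard : 1 ≤ (Finset.univ.filter fun j : W => X i j = 1).card :=
      Finset.card_pos.mpr ⟨w, hmem⟩
    have : (1:ℝ) ≤ ((Finset.univ.filter fun j : W => X i j = 1).card : ℝ) := by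
      exact_mod_cast hcard
    linarith
end

section
/- Let R, W be finite sets with W nonempty, α ≥ 0, and X : R × W → {0,1}. Among all feasible solutions (I, J) to the constraint Σ_{i ∈ R∖I, j ∈ W∖J} X i j ≤ α |W|, the solution with J = ∅ and I equal to the set of reviews violating the Bonferroni per-review threshold has objective value |I| + 0, which is greater than or equal to the optimal value of the optimization problem in Algorithm 2. -/
/-- Let `I_B` be the set of reviews violating the Bonferroni per-review threshold
`α |W| / |R|`. Then `(I_B, ∅)` is feasible for the FWER constraint of Algorithm 2,
and hence the optimal value of the minimization of the objective
`|I| + |J|·|R∖I|/|W|` over feasible pairs `(I, J)` is at most `|I_B|`. -/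
theorem stmt12 {R W : Type*} [Fintype R] [Fintype W] [Nonempty R] [Nonempty W]
    [DecidableEq R] [DecidableEq W]
    (X : R → W → ℕ) (α : ℝ) (hα : 0 ≤ α) :
    let IB : Finset R := Finset.univ.filter fun i : R =>
      α * (Fintype.card W : ℝ) / (Fintype.card R : ℝ) < ∑ j : W, (X i j : ℝ)
    (∑ i ∈ Finset.univ \ IB, ∑ j ∈ Finset.univ \ (∅ : Finset W), (X i j : ℝ))
        ≤ α * (Fintype.card W : ℝ)
    ∧ sInf {v : ℝ | ∃ (I : Finset R) (J : Finset W),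
          (∑ i ∈ Finset.univ \ I, ∑ j ∈ Finset.univ \ J, (X i j : ℝ))
            ≤ α * (Fintype.card W : ℝ)
          ∧ v = (I.card : ℝ)
              + (J.card : ℝ) * ((Finset.univ \ I).card : ℝ) / (Fintype.card W : ℝ)}
        ≤ (IB.card : ℝ) := by
  intro IB
  have hRpos : (0 : ℝ) < Fintype.card R := by
    exact_mod_cast Fintype.card_pos
  have hfeas : (∑ i ∈ Finset.univ \ IB, ∑ j ∈ Finset.univ \ (∅ : Finset W), (X i j : ℝ))
      ≤ α * (Fintype.card W : ℝ) := by
    have hbound : ∀ i ∈ Finset.univ \ IB,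
        (∑ j ∈ Finset.univ \ (∅ : Finset W), (X i j : ℝ))
          ≤ α * (Fintype.card W : ℝ) / (Fintype.card R : ℝ) := by
      intro i hi
      simp only [IB, Finset.mem_sdiff, Finset.mem_filter, Finset.mem_univ, true_and,
        not_lt] at hi
      simpa using hi
    calc (∑ i ∈ Finset.univ \ IB, ∑ j ∈ Finset.univ \ (∅ : Finset W), (X i j : ℝ))
        ≤ ∑ _i ∈ Finset.univ \ IB, α * (Fintype.card W : ℝ) / (Fintype.card R : ℝ) :=
          Finset.sum_le_sum hbound
      _ = ((Finset.univ \ IB).card : ℝ) * (α * (Fintype.card W : ℝ) / (Fintype.card R : ℝ)) := by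
          rw [Finset.sum_const, nsmul_eq_mul]
      _ ≤ (Fintype.card R : ℝ) * (α * (Fintype.card W : ℝ) / (Fintype.card R : ℝ)) := by
          apply mul_le_mul_of_nonneg_right
          · exact_mod_cast Finset.card_le_card (Finset.sdiff_subset)
            |>.trans_eq (by simp)
          · positivity
      _ = α * (Fintype.card W : ℝ) := by field_simp
  refine ⟨hfeas, ?_⟩
  apply csInf_le
  · refine ⟨0, ?_⟩
    rintro v ⟨I, J, _, rfl⟩
    positivity
  · exact ⟨IB, ∅, hfeas, by simp⟩
end
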